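/- arXiv:0911.2292 — 6 statements merged into one kernel-verified Lean document; each statement's English description precedes it below -/
import Mathlib

section
/- Every rich MSTD set is an MSTD set. That is, if S ⊆ [0,n] is a rich MSTD set with MSTD fringe pair (A, B; k), then |S+S| > |S−S|. -/
open Finset Filter Pointwise
open scoped Classical

/-- `n - S = {n - s : s ∈ S}`. -/
def mirror (n : ℕ) (S : Finset ℤ) : Finset ℤ := S.image (fun s => (n : ℤ) - s)

/-- Probability that a uniformly random subset of `[0,n]` satisfies `P`. -/
noncomputable def prAll (n : ℕ) (P : Finset ℤ → Prop) : ℝ :=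
  (((Finset.Icc (0:ℤ) n).powerset.filter P).card : ℝ) / 2 ^ (n + 1)

/-- Probability w.r.t. the uniform distribution on subsets of `[0,n]` containing `0` and `n`. -/
noncomputable def pr0n (n : ℕ) (P : Finset ℤ → Prop) : ℝ :=
  (((Finset.Icc (0:ℤ) n).powerset.filter
      (fun S => (0:ℤ) ∈ S ∧ (n:ℤ) ∈ S ∧ P S)).card : ℝ) / 2 ^ (n - 1)

/-- A finite set of integers is MSTD if it has more sums than differences. -/
def IsMSTD (S : Finset ℤ) : Prop := (S - S).card < (S + S).card

/-- Probability that a uniformly random subset of `[0,n]` is MSTD. -/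
noncomputable def rhoN (n : ℕ) : ℝ := prAll n IsMSTD

/-- The pair (number of missing sums, number of missing differences) of `S ⊆ [0,n]`. -/
def lam (n : ℕ) (S : Finset ℤ) : ℕ × ℕ :=
  (2 * n + 1 - (S + S).card, 2 * n + 1 - (S - S).card)

/-- Probability that a uniformly random subset of `[0,n]` satisfies `lam n S ∈ Λ`. -/
noncomputable def rhoL (Λ : Set (ℕ × ℕ)) (n : ℕ) : ℝ := prAll n (fun S => lam n S ∈ Λ)

/-- An MSTD fringe pair of order `k`. -/
def IsFringePair (A B : Finset ℤ) (k : ℕ) : Prop :=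
  A ⊆ Finset.Icc (0:ℤ) k ∧ B ⊆ Finset.Icc (0:ℤ) k ∧ (0:ℤ) ∈ A ∧ (0:ℤ) ∈ B ∧
    2 * ((A + B) ∩ Finset.Icc (0:ℤ) k).card <
      ((A + A) ∩ Finset.Icc (0:ℤ) k).card + ((B + B) ∩ Finset.Icc (0:ℤ) k).card

/-- `S ⊆ [0,n]` is a rich MSTD set with MSTD fringe pair `(A, B; k)`. -/
def IsRichWith (n : ℕ) (S A B : Finset ℤ) (k : ℕ) : Prop :=
  IsFringePair A B k ∧ 2 * k < n ∧ S ∩ Finset.Icc (0:ℤ) k = A ∧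
    mirror n S ∩ Finset.Icc (0:ℤ) k = B ∧
    Finset.Icc ((k:ℤ) + 1) (2 * n - k - 1) ⊆ S + S

/-- The strict partial order on MSTD fringe pairs: `(A', B'; k') < (A, B; k)`. -/
def FringeLt (A' B' : Finset ℤ) (k' : ℕ) (A B : Finset ℤ) (k : ℕ) : Prop :=
  IsFringePair A' B' k' ∧ IsFringePair A B k ∧ k' < k ∧
    A' = A ∩ Finset.Icc (0:ℤ) k' ∧ B' = B ∩ Finset.Icc (0:ℤ) k' ∧
    Finset.Icc ((k':ℤ) + 1) k ⊆ A + A ∧ Finset.Icc ((k':ℤ) + 1) k ⊆ B + B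

/-- A minimal MSTD fringe pair. -/
def MinimalFringePair (A B : Finset ℤ) (k : ℕ) : Prop :=
  IsFringePair A B k ∧ ¬ ∃ A' B' k', FringeLt A' B' k' A B k

/-- `σ_n(A; k)`: probability that a uniform random `T ⊆ [0,n]` is `k`-semi-rich with
prefix `(A; k)`. -/
noncomputable def sigmaN (A : Finset ℤ) (k n : ℕ) : ℝ :=
  (((Finset.Icc (0:ℤ) n).powerset.filter
      (fun T => T ∩ Finset.Icc (0:ℤ) k = A ∧ Finset.Icc ((k:ℤ) + 1) n ⊆ T + T)).card : ℝ) / 2 ^ n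

/-- `ρ_n(A, B; k) = 2^{-n+1} · #{S ⊆ [0,n] : S ∩ [0,k] = A, (n−S) ∩ [0,k] = B,
[k+1, 2n−k−1] ⊆ S+S}`. -/
noncomputable def rhoABn (A B : Finset ℤ) (k n : ℕ) : ℝ :=
  2 * (((Finset.Icc (0:ℤ) n).powerset.filter
      (fun S => S ∩ Finset.Icc (0:ℤ) k = A ∧ mirror n S ∩ Finset.Icc (0:ℤ) k = B ∧
        Finset.Icc ((k:ℤ) + 1) (2 * n - k - 1) ⊆ S + S)).card : ℝ) / 2 ^ n

/-- `ρ_{*n} = 2^{-n+1} · #{S ⊆ [0,n] : 0, n ∈ S and S is MSTD}`. -/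
noncomputable def rhoStarN (n : ℕ) : ℝ :=
  2 * (((Finset.Icc (0:ℤ) n).powerset.filter
      (fun S => (0:ℤ) ∈ S ∧ (n:ℤ) ∈ S ∧ IsMSTD S)).card : ℝ) / 2 ^ n

/-- `G_j(A; k) = #{T ⊆ [0,j] : T ∩ [0,k] = A, [k+1,j−1] ⊆ T+T, j ∉ T+T}`. -/
noncomputable def G (A : Finset ℤ) (k j : ℕ) : ℕ :=
  ((Finset.Icc (0:ℤ) j).powerset.filter
      (fun T => T ∩ Finset.Icc (0:ℤ) k = A ∧
        Finset.Icc ((k:ℤ) + 1) ((j:ℤ) - 1) ⊆ T + T ∧ (j:ℤ) ∉ T + T)).card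

/-- `S ⊆ [0,n]` is `k`-affluent. -/
def Affluent (n k : ℕ) (S : Finset ℤ) : Prop :=
  Finset.Icc ((k:ℤ) + 1) (2 * n - k - 1) ⊆ S + S ∧
    Finset.Icc (-(n:ℤ) + k + 1) ((n:ℤ) - k - 1) ⊆ S - S

/-- `μ_n(A, B; k)`: probability that a uniform random `S ⊆ [0,n]` is `k`-affluent
with fringe pair `(A, B; k)`. -/
noncomputable def muN (A B : Finset ℤ) (k n : ℕ) : ℝ :=
  prAll n (fun S => S ∩ Finset.Icc (0:ℤ) k = A ∧ mirror n S ∩ Finset.Icc (0:ℤ) k = B ∧ Affluent n k S)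

/-- The strict partial order on general fringe pairs. -/
def GFringeLt (A' B' : Finset ℤ) (k' : ℕ) (A B : Finset ℤ) (k : ℕ) : Prop :=
  A' ⊆ Finset.Icc (0:ℤ) k' ∧ B' ⊆ Finset.Icc (0:ℤ) k' ∧ A ⊆ Finset.Icc (0:ℤ) k ∧ B ⊆ Finset.Icc (0:ℤ) k ∧
    k' < k ∧ A' = A ∩ Finset.Icc (0:ℤ) k' ∧ B' = B ∩ Finset.Icc (0:ℤ) k' ∧
    Finset.Icc ((k':ℤ) + 1) k ⊆ A + A ∧ Finset.Icc ((k':ℤ) + 1) k ⊆ B + B ∧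
    Finset.Icc ((k':ℤ) + 1) k ⊆ A + B

/-- A minimal general fringe pair. -/
def GMinimal (A B : Finset ℤ) (k : ℕ) : Prop :=
  A ⊆ Finset.Icc (0:ℤ) k ∧ B ⊆ Finset.Icc (0:ℤ) k ∧ ¬ ∃ A' B' k', GFringeLt A' B' k' A B k

/-- `λ(A, B; k)` for a general fringe pair. -/
noncomputable def lamPair (A B : Finset ℤ) (k : ℕ) : ℕ × ℕ :=
  (2 * (k + 1) - ((A + A) ∩ Finset.Icc (0:ℤ) k).card - ((B + B) ∩ Finset.Icc (0:ℤ) k).card,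
   2 * (k + 1 - ((A + B) ∩ Finset.Icc (0:ℤ) k).card))

/-! Write `I = [0,k]`. The sums `(A+A) ∩ I`, the middle interval `[k+1, 2n-k-1]` and the
reflection `2n - (B+B) ∩ I` are disjoint pieces of `S+S`. Conversely a difference `s - t` with
`s - t ≥ n - k` is `n - (t + (n - s))` with `t ∈ A`, `n - s ∈ B`, so `S-S` is covered by
`±(n - (A+B) ∩ I)` and the middle interval `[-(n-k-1), n-k-1]`, which has the same length as
`[k+1, 2n-k-1]`. Hence `|S+S| - |S-S| ≥ |(A+A) ∩ I| + |(B+B) ∩ I| - 2 |(A+B) ∩ I| > 0`. -/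

section RichMSTD

variable {n k : ℕ} {S A B : Finset ℤ}

theorem mem_mirror {x : ℤ} : x ∈ mirror n S ↔ ∃ s ∈ S, (n : ℤ) - s = x := mem_image

theorem image_two_mul_sub_subset_add (hB : B ⊆ mirror n S) :
    (B + B).image (fun x => 2 * (n : ℤ) - x) ⊆ S + S := by
  intro y hy
  obtain ⟨_, hx, rfl⟩ := mem_image.1 hy
  obtain ⟨b, hb, c, hc, rfl⟩ := mem_add.1 hx
  obtain ⟨s, hs, rfl⟩ := mem_mirror.1 (hB hb)
  obtain ⟨t, ht, rfl⟩ := mem_mirror.1 (hB hc)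
  exact mem_add.2 ⟨s, hs, t, ht, by ring⟩

theorem card_Icc_middle_sums_eq_diffs :
    (Icc ((k : ℤ) + 1) (2 * n - k - 1)).card = (Icc (-(n : ℤ) + k + 1) (n - k - 1)).card := by
  simp only [Int.card_Icc]
  congr 1
  ring

theorem card_add_ge_of_fringe (hkn : k < n) (hA : A ⊆ S) (hB : B ⊆ mirror n S)
    (hmid : Icc ((k : ℤ) + 1) (2 * n - k - 1) ⊆ S + S) :
    ((A + A) ∩ Icc 0 (k : ℤ)).card + (Icc ((k : ℤ) + 1) (2 * n - k - 1)).card +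
      ((B + B) ∩ Icc 0 (k : ℤ)).card ≤ (S + S).card := by
  set P := (A + A) ∩ Icc 0 (k : ℤ)
  set M := Icc ((k : ℤ) + 1) (2 * n - k - 1)
  set Q := (B + B) ∩ Icc 0 (k : ℤ)
  have hP : P ⊆ S + S := inter_subset_left.trans (add_subset_add hA hA)
  have hQ : Q.image (fun x => 2 * (n : ℤ) - x) ⊆ S + S :=
    (image_subset_image inter_subset_left).trans (image_two_mul_sub_subset_add hB)
  have hdisj₁ : Disjoint P M := disjoint_left.2 fun x hx hx' => by
    have := mem_Icc.1 (mem_inter.1 hx).2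
    have := mem_Icc.1 hx'
    omega
  have hdisj₂ : Disjoint (P ∪ M) (Q.image (fun x => 2 * (n : ℤ) - x)) := by
    refine disjoint_left.2 fun x hx hx' => ?_
    obtain ⟨y, hy, rfl⟩ := mem_image.1 hx'
    have := mem_Icc.1 (mem_inter.1 hy).2
    rcases mem_union.1 hx with hx | hx
    · have := mem_Icc.1 (mem_inter.1 hx).2
      omega
    · have := mem_Icc.1 hx
      omega
  have hinj : Function.Injective (fun x : ℤ => 2 * (n : ℤ) - x) := fun x y h => by
    simpa using h
  simpa only [card_union_of_disjoint hdisj₂, card_union_of_disjoint hdisj₁,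
    card_image_of_injective _ hinj] using card_le_card (union_subset (union_subset hP hmid) hQ)

theorem add_sub_mem_inter_of_le_sub (hS : S ⊆ Icc 0 (n : ℤ)) (hA : S ∩ Icc 0 (k : ℤ) = A)
    (hB : mirror n S ∩ Icc 0 (k : ℤ) = B) {s t : ℤ} (hs : s ∈ S) (ht : t ∈ S)
    (hst : (n : ℤ) - k ≤ s - t) : t + (n - s) ∈ (A + B) ∩ Icc 0 (k : ℤ) := by
  have hs' := mem_Icc.1 (hS hs)
  have ht' := mem_Icc.1 (hS ht)
  refine mem_inter.2 ⟨add_mem_add ?_ ?_, mem_Icc.2 ⟨by omega, by omega⟩⟩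
  · exact hA ▸ mem_inter.2 ⟨ht, mem_Icc.2 ⟨by omega, by omega⟩⟩
  · exact hB ▸ mem_inter.2 ⟨mem_mirror.2 ⟨s, hs, rfl⟩, mem_Icc.2 ⟨by omega, by omega⟩⟩

theorem card_sub_le_of_fringe (hS : S ⊆ Icc 0 (n : ℤ)) (hA : S ∩ Icc 0 (k : ℤ) = A)
    (hB : mirror n S ∩ Icc 0 (k : ℤ) = B) :
    (S - S).card ≤
      2 * ((A + B) ∩ Icc 0 (k : ℤ)).card + (Icc (-(n : ℤ) + k + 1) (n - k - 1)).card := by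
  set R := (A + B) ∩ Icc 0 (k : ℤ)
  set I := Icc (-(n : ℤ) + k + 1) (n - k - 1)
  have hsub : S - S ⊆ R.image (fun x => (n : ℤ) - x) ∪ I ∪ R.image (fun x => x - (n : ℤ)) := by
    intro d hd
    obtain ⟨s, hs, t, ht, rfl⟩ := mem_sub.1 hd
    by_cases hpos : (n : ℤ) - k ≤ s - t
    · exact mem_union_left _ <| mem_union_left _ <|
        mem_image.2 ⟨_, add_sub_mem_inter_of_le_sub hS hA hB hs ht hpos, by ring⟩
    by_cases hneg : (n : ℤ) - k ≤ t - s
    · exact mem_union_right _ <|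
        mem_image.2 ⟨_, add_sub_mem_inter_of_le_sub hS hA hB ht hs hneg, by ring⟩
    exact mem_union_left _ <| mem_union_right _ <| mem_Icc.2 ⟨by omega, by omega⟩
  calc (S - S).card
      ≤ (R.image (fun x => (n : ℤ) - x) ∪ I ∪ R.image (fun x => x - (n : ℤ))).card :=
        card_le_card hsub
    _ ≤ (R.image (fun x => (n : ℤ) - x)).card + I.card + (R.image (fun x => x - (n : ℤ))).card :=
        (card_union_le _ _).trans (by gcongr; exact card_union_le _ _)
    _ ≤ 2 * R.card + I.card := by
        have := card_image_le (s := R) (f := fun x => (n : ℤ) - x)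
        have := card_image_le (s := R) (f := fun x => x - (n : ℤ))
        omega

end RichMSTD

/-- every rich MSTD set is an MSTD set. -/
theorem rich_mstd_is_mstd (n : ℕ) (S A B : Finset ℤ) (k : ℕ)
    (hS : S ⊆ Finset.Icc 0 (n:ℤ)) (h : IsRichWith n S A B k) :
    IsMSTD S := by
  obtain ⟨⟨-, -, -, -, hfringe⟩, hkn, hA, hB, hmid⟩ := h
  have hsums := card_add_ge_of_fringe (by omega) (hA ▸ inter_subset_left)
    (hB ▸ inter_subset_left) hmid
  have hdiffs := card_sub_le_of_fringe hS hA hB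
  have hmiddle := card_Icc_middle_sums_eq_diffs (n := n) (k := k)
  unfold IsMSTD
  omega
end

section
/- Let S ⊆ [0,n] be a rich MSTD set, and let (A, B; k) and (A', B'; k') be two MSTD fringe pairs of S. If k = k', then (A, B; k) = (A', B'; k'). If k > k', then (A, B; k) > (A', B'; k') in the partial order on MSTD fringe pairs, i.e., A' = A ∩ [0,k'], B' = B ∩ [0,k'], [k'+1, k] ⊆ A+A, and [k'+1, k] ⊆ B+B. -/
open Finset Filter Pointwise
open scoped Classical

/-!
The fringes of a rich set are the traces of `S` and `n - S` on `[0, k]`, so the smaller pair is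
the trace of the larger one. A sum `x ≤ k` of two elements of `S ⊆ [0, n]` only uses elements of
`S ∩ [0, k]`, hence `[k' + 1, k] ⊆ A + A`; as the interval `[k' + 1, 2n - k' - 1]` covered by
`S + S` is symmetric about `n`, it is covered by `(n - S) + (n - S)` too, which gives `B + B`.
-/

theorem Finset.inter_Icc_zero_inter_Icc_zero {S : Finset ℤ} {k' k : ℤ} (hk : k' ≤ k) :
    S ∩ Icc 0 k ∩ Icc 0 k' = S ∩ Icc 0 k' := by
  rw [inter_assoc, inter_eq_right.2 (Icc_subset_Icc_right hk)]

theorem Finset.Icc_subset_add_inter_Icc {S : Finset ℤ} {a b k : ℤ} (hS : ∀ s ∈ S, 0 ≤ s)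
    (h : Icc a b ⊆ S + S) (hk : k ≤ b) :
    Icc a k ⊆ (S ∩ Icc 0 k) + (S ∩ Icc 0 k) := by
  intro x hx
  rw [mem_Icc] at hx
  obtain ⟨s, hs, t, ht, rfl⟩ := mem_add.1 (h (mem_Icc.2 ⟨hx.1, hx.2.trans hk⟩))
  have hs0 := hS s hs
  have ht0 := hS t ht
  exact add_mem_add (mem_inter.2 ⟨hs, mem_Icc.2 ⟨by omega, by omega⟩⟩)
    (mem_inter.2 ⟨ht, mem_Icc.2 ⟨by omega, by omega⟩⟩)

theorem mirror_nonneg {n : ℕ} {S : Finset ℤ} (hS : ∀ s ∈ S, s ≤ n) :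
    ∀ t ∈ mirror n S, 0 ≤ t := by
  simp only [mirror, mem_image, forall_exists_index, and_imp]
  rintro _ s hs rfl
  linarith [hS s hs]

theorem Icc_subset_mirror_add_mirror {n : ℕ} {S : Finset ℤ} {a b : ℤ} (hab : a + b = 2 * n)
    (h : Icc a b ⊆ S + S) : Icc a b ⊆ mirror n S + mirror n S := by
  intro x hx
  rw [mem_Icc] at hx
  obtain ⟨s, hs, t, ht, hst⟩ := mem_add.1 (h (mem_Icc.2 ⟨by omega, by omega⟩ : 2 * n - x ∈ Icc a b))
  exact mem_add.2 ⟨n - s, mem_image_of_mem _ hs, n - t, mem_image_of_mem _ ht, by omega⟩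

/-- the MSTD fringe pairs of a rich MSTD set form a chain. -/
theorem fringe_pairs_chain (n : ℕ) (S A B A' B' : Finset ℤ) (k k' : ℕ)
    (hS : S ⊆ Finset.Icc 0 (n:ℤ))
    (h : IsRichWith n S A B k) (h' : IsRichWith n S A' B' k') :
    (k = k' → A = A' ∧ B = B') ∧ (k' < k → FringeLt A' B' k' A B k) := by
  obtain ⟨hAB, hkn, rfl, rfl, -⟩ := h
  obtain ⟨hAB', -, rfl, rfl, hSS'⟩ := h'
  refine ⟨by rintro rfl; exact ⟨rfl, rfl⟩, fun hlt => ⟨hAB', hAB, hlt, ?_, ?_, ?_, ?_⟩⟩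
  · exact (inter_Icc_zero_inter_Icc_zero (by exact_mod_cast hlt.le)).symm
  · exact (inter_Icc_zero_inter_Icc_zero (by exact_mod_cast hlt.le)).symm
  · exact Icc_subset_add_inter_Icc (fun s hs => (mem_Icc.1 (hS hs)).1) hSS' (by omega)
  · exact Icc_subset_add_inter_Icc (mirror_nonneg fun s hs => (mem_Icc.1 (hS hs)).2)
      (Icc_subset_mirror_add_mirror (by ring) hSS') (by omega)
end

section
/- Let S ⊆ [0,n] be a rich MSTD set and let (A, B; k) be the MSTD fringe pair of S of smallest order. Then (A, B; k) is a minimal element in the partial order on all MSTD fringe pairs. Moreover, for every k' with k < k' < n/2, the pair (A', B'; k') with A' = S ∩ [0,k'] and B' = (n − S) ∩ [0,k'] is also an MSTD fringe pair of S, and every MSTD fringe pair of S has this form. -/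
open Finset Filter Pointwise
open scoped Classical

/-! Richness of order `k` says that `S + S` contains the whole middle `[k+1, 2n-k-1]`. Raising the
order to `k' < n/2` therefore adds the full block `[k+1, k']` to both `(A+A) ∩ [0,k']` and
`(B+B) ∩ [0,k']`, while `(A+B) ∩ [0,k']` gains at most `k' - k` elements, so the fringe inequality
survives. Conversely, a pair `(A', B'; k')` below `(A, B; k)` is again a fringe pair of `S`: the
gap `[k'+1, k]` is covered by `A + A ⊆ S + S` and its mirror image by `B + B`. So a fringe pair of
`S` of least order has nothing below it. -/

lemma add_inter_Icc_zero_eq {X Y : Finset ℤ} (hX : ∀ x ∈ X, 0 ≤ x) (hY : ∀ y ∈ Y, 0 ≤ y) (m : ℤ) :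
    (X ∩ Icc 0 m + Y ∩ Icc 0 m) ∩ Icc 0 m = (X + Y) ∩ Icc 0 m := by
  ext z
  simp only [mem_inter, Finset.mem_add, mem_Icc]
  constructor
  · rintro ⟨⟨x, ⟨hx, -⟩, y, ⟨hy, -⟩, rfl⟩, hz⟩
    exact ⟨⟨x, hx, y, hy, rfl⟩, hz⟩
  · rintro ⟨⟨x, hx, y, hy, rfl⟩, hz⟩
    have := hX x hx
    have := hY y hy
    exact ⟨⟨x, ⟨hx, by omega, by omega⟩, y, ⟨hy, by omega, by omega⟩, rfl⟩, hz⟩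

lemma subset_add_inter_Icc_zero {X Y T : Finset ℤ} (hX : ∀ x ∈ X, 0 ≤ x) (hY : ∀ y ∈ Y, 0 ≤ y)
    {m : ℤ} (hTm : T ⊆ Icc 0 m) (hT : T ⊆ X + Y) : T ⊆ X ∩ Icc 0 m + Y ∩ Icc 0 m := by
  intro z hz
  have hz' : z ∈ (X + Y) ∩ Icc 0 m := mem_inter.2 ⟨hT hz, hTm hz⟩
  rw [← add_inter_Icc_zero_eq hX hY] at hz'
  exact mem_of_mem_inter_left hz'

lemma card_inter_Icc_zero_eq_add (T : Finset ℤ) {k k' : ℕ} (hkk' : k ≤ k') :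
    (T ∩ Icc 0 (k' : ℤ)).card = (T ∩ Icc 0 (k : ℤ)).card + (T ∩ Icc ((k : ℤ) + 1) k').card := by
  have hdisj : Disjoint (Icc (0 : ℤ) k) (Icc ((k : ℤ) + 1) k') :=
    disjoint_left.2 fun x h₁ h₂ => by
      rw [mem_Icc] at h₁ h₂
      omega
  have hunion : Icc (0 : ℤ) k ∪ Icc ((k : ℤ) + 1) k' = Icc 0 (k' : ℤ) := by
    ext x
    simp only [mem_union, mem_Icc]
    omega
  rw [← card_union_of_disjoint (hdisj.mono inter_subset_right inter_subset_right),
    ← inter_union_distrib_left, hunion]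

lemma card_add_inter_Icc_zero_eq_add {X Y : Finset ℤ} (hX : ∀ x ∈ X, 0 ≤ x)
    (hY : ∀ y ∈ Y, 0 ≤ y) {k k' : ℕ} (hkk' : k ≤ k') :
    ((X + Y) ∩ Icc 0 (k' : ℤ)).card =
      ((X ∩ Icc 0 (k : ℤ) + Y ∩ Icc 0 (k : ℤ)) ∩ Icc 0 (k : ℤ)).card +
        ((X + Y) ∩ Icc ((k : ℤ) + 1) k').card := by
  rw [card_inter_Icc_zero_eq_add _ hkk', add_inter_Icc_zero_eq hX hY]

theorem IsFringePair.extend {A B : Finset ℤ} {k k' : ℕ}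
    (h : IsFringePair (A ∩ Icc 0 (k : ℤ)) (B ∩ Icc 0 (k : ℤ)) k) (hkk' : k ≤ k')
    (hA : A ⊆ Icc 0 (k' : ℤ)) (hB : B ⊆ Icc 0 (k' : ℤ))
    (hAA : Icc ((k : ℤ) + 1) k' ⊆ A + A) (hBB : Icc ((k : ℤ) + 1) k' ⊆ B + B) :
    IsFringePair A B k' := by
  obtain ⟨-, -, h0A, h0B, hlt⟩ := h
  have hA0 : ∀ a ∈ A, 0 ≤ a := fun a ha => (mem_Icc.1 (hA ha)).1
  have hB0 : ∀ b ∈ B, 0 ≤ b := fun b hb => (mem_Icc.1 (hB hb)).1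
  have hfull : ∀ {T : Finset ℤ}, Icc ((k : ℤ) + 1) k' ⊆ T →
      (T ∩ Icc ((k : ℤ) + 1) k').card = k' - k := fun hT => by
    rw [inter_eq_right.2 hT, Int.card_Icc]
    omega
  have hAB : ((A + B) ∩ Icc ((k : ℤ) + 1) k').card ≤ k' - k := by
    have := card_le_card (inter_subset_right (s₁ := A + B) (s₂ := Icc ((k : ℤ) + 1) k'))
    rw [Int.card_Icc] at this
    omega
  refine ⟨hA, hB, mem_of_mem_inter_left h0A, mem_of_mem_inter_left h0B, ?_⟩
  rw [card_add_inter_Icc_zero_eq_add hA0 hA0 hkk', card_add_inter_Icc_zero_eq_add hB0 hB0 hkk',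
    card_add_inter_Icc_zero_eq_add hA0 hB0 hkk', hfull hAA, hfull hBB]
  omega

lemma mirror_subset_Icc {n : ℕ} {S : Finset ℤ} (hS : S ⊆ Icc 0 (n : ℤ)) :
    mirror n S ⊆ Icc 0 (n : ℤ) := by
  intro x hx
  obtain ⟨s, hs, rfl⟩ := mem_image.1 hx
  have := mem_Icc.1 (hS hs)
  exact mem_Icc.2 ⟨by omega, by omega⟩

lemma mem_mirror_add_mirror {n : ℕ} {S : Finset ℤ} {x : ℤ} :
    x ∈ mirror n S + mirror n S ↔ 2 * n - x ∈ S + S := by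
  simp only [mirror, Finset.mem_add, mem_image]
  constructor
  · rintro ⟨_, ⟨s, hs, rfl⟩, _, ⟨t, ht, rfl⟩, rfl⟩
    exact ⟨s, hs, t, ht, by ring⟩
  · rintro ⟨s, hs, t, ht, hst⟩
    exact ⟨_, ⟨s, hs, rfl⟩, _, ⟨t, ht, rfl⟩, by omega⟩

namespace IsRichWith

variable {n : ℕ} {S A B : Finset ℤ} {k : ℕ}

theorem of_fringeLt {A' B' : Finset ℤ} {k' : ℕ} (h : IsRichWith n S A B k)
    (hlt : FringeLt A' B' k' A B k) : IsRichWith n S A' B' k' := by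
  obtain ⟨-, hk, hA, hB, hrich⟩ := h
  obtain ⟨hfp', -, hk', rfl, rfl, hAA, hBB⟩ := hlt
  have hIcc : Icc (0 : ℤ) k ∩ Icc 0 (k' : ℤ) = Icc 0 (k' : ℤ) :=
    inter_eq_right.2 (Icc_subset_Icc_right (by omega))
  have hAS : A + A ⊆ S + S := add_subset_add (hA ▸ inter_subset_left) (hA ▸ inter_subset_left)
  have hBM : B + B ⊆ mirror n S + mirror n S :=
    add_subset_add (hB ▸ inter_subset_left) (hB ▸ inter_subset_left)
  refine ⟨hfp', by omega, by rw [← hA, inter_assoc, hIcc], by rw [← hB, inter_assoc, hIcc], ?_⟩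
  intro x hx
  rw [mem_Icc] at hx
  rcases le_or_gt x k with hxk | hxk
  · exact hAS (hAA (mem_Icc.2 ⟨hx.1, hxk⟩))
  rcases le_or_gt x (2 * n - k - 1) with hxn | hxn
  · exact hrich (mem_Icc.2 ⟨hxk, hxn⟩)
  · have := mem_mirror_add_mirror.1 (hBM (hBB (mem_Icc.2 ⟨by omega, by omega⟩ : 2 * n - x ∈ _)))
    rwa [sub_sub_cancel] at this

theorem restrict_of_le (hS : S ⊆ Icc 0 (n : ℤ)) (h : IsRichWith n S A B k) {k' : ℕ}
    (hkk' : k ≤ k') (hk' : 2 * k' < n) :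
    IsRichWith n S (S ∩ Icc 0 (k' : ℤ)) (mirror n S ∩ Icc 0 (k' : ℤ)) k' := by
  obtain ⟨hfp, -, hA, hB, hrich⟩ := h
  have hS0 : ∀ x ∈ S, 0 ≤ x := fun x hx => (mem_Icc.1 (hS hx)).1
  have hM0 : ∀ x ∈ mirror n S, 0 ≤ x := fun x hx => (mem_Icc.1 (mirror_subset_Icc hS hx)).1
  have hIcc : Icc (0 : ℤ) k' ∩ Icc 0 (k : ℤ) = Icc 0 (k : ℤ) :=
    inter_eq_right.2 (Icc_subset_Icc_right (by omega))
  have hgap : Icc ((k : ℤ) + 1) k' ⊆ Icc 0 (k' : ℤ) := Icc_subset_Icc (by omega) le_rfl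
  have hSS : Icc ((k : ℤ) + 1) k' ⊆ S + S := (Icc_subset_Icc_right (by omega)).trans hrich
  have hMM : Icc ((k : ℤ) + 1) k' ⊆ mirror n S + mirror n S := fun x hx => by
    have := mem_Icc.1 hx
    exact mem_mirror_add_mirror.2 (hrich (mem_Icc.2 ⟨by omega, by omega⟩))
  refine ⟨?_, hk', rfl, rfl, (Icc_subset_Icc (by omega) (by omega)).trans hrich⟩
  refine IsFringePair.extend ?_ hkk' inter_subset_right inter_subset_right
    (subset_add_inter_Icc_zero hS0 hS0 hgap hSS) (subset_add_inter_Icc_zero hM0 hM0 hgap hMM)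
  rw [inter_assoc, inter_assoc, hIcc, hA, hB]
  exact hfp

end IsRichWith

/-- the MSTD fringe pair of a rich MSTD set of smallest order is a minimal
MSTD fringe pair; for every `k < k' < n/2` the induced pair is also an MSTD fringe pair
of `S`; and every MSTD fringe pair of `S` has this form. -/
theorem minimal_fringe_pair_of_rich (n : ℕ) (S A B : Finset ℤ) (k : ℕ)
    (hS : S ⊆ Finset.Icc 0 (n:ℤ))
    (h : IsRichWith n S A B k)
    (hmin : ∀ A' B' k', IsRichWith n S A' B' k' → k ≤ k') :
    MinimalFringePair A B k ∧
    (∀ k' : ℕ, k < k' → 2 * k' < n →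
      IsRichWith n S (S ∩ Finset.Icc (0:ℤ) k') (mirror n S ∩ Finset.Icc (0:ℤ) k') k') ∧
    (∀ A' B' k', IsRichWith n S A' B' k' →
      A' = S ∩ Finset.Icc (0:ℤ) k' ∧ B' = mirror n S ∩ Finset.Icc (0:ℤ) k') := by
  refine ⟨⟨h.1, ?_⟩, fun k' hk' h2k' => h.restrict_of_le hS hk'.le h2k', ?_⟩
  · rintro ⟨A', B', k', hlt⟩
    have hk'k : k' < k := hlt.2.2.1
    exact (hmin A' B' k' (h.of_fringeLt hlt)).not_gt hk'k
  · rintro A' B' k' ⟨-, -, hA', hB', -⟩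
    exact ⟨hA'.symm, hB'.symm⟩
end

section
/- For every k ≥ 0 and every A ⊆ [0,k] with 0 ∈ A, the limit σ(A; k) = lim_{n→∞} σ_n(A; k) exists and is positive. -/
open Finset Filter Pointwise
open scoped Classical

/-! The sequence `σ_n(A; k)` is nonincreasing once `n ≥ k`: erasing `n + 1` maps a semi-rich set
on `[0, n + 1]` to one on `[0, n]`, and at most two sets have the same image. For a positive
lower bound, only count the sets `T` containing the block `[k + 1, N]`, `N = 2k + 4`; with
`0 ∈ A` this already puts `[k + 1, 2N]` into `T + T`. A sum `m = 2N + 1 + t` is missed only if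
`m - a ∉ T` for every `a ∈ [k + 1, N]` and `{a, m - a} ⊄ T` for every `a ∈ (N, m / 2)`; these
independent events have joint probability `(1/2)^(k+4) (3/4)^⌊t/2⌋`, which sums over `t` to at
most `1/2`. A union bound gives `σ_n(A; k) ≥ 2^(-(N+1))` for `n ≥ N`. -/

theorem card_filter_forall_not_subset_le {α ι : Type*} (I : Finset ι) (s : Finset α)
    (f : ι → Finset α) (hfs : ∀ i ∈ I, f i ⊆ s) (hf : (I : Set ι).PairwiseDisjoint f) :
    (#{U ∈ s.powerset | ∀ i ∈ I, ¬ f i ⊆ U} : ℝ) ≤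
      2 ^ #s * ∏ i ∈ I, (1 - (1 / 2 : ℝ) ^ #(f i)) := by
  induction I using Finset.induction_on generalizing s with
  | empty => simp
  | insert i I hi ih =>
    rw [coe_insert, Set.pairwiseDisjoint_insert] at hf
    obtain ⟨hfI, hfi⟩ := hf
    have hts : f i ⊆ s := hfs i (mem_insert_self i I)
    have hI : ∀ j ∈ I, f j ⊆ s \ f i := fun j hj =>
      subset_sdiff.2 ⟨hfs j (mem_insert_of_mem hj), (hfi j hj (by rintro rfl; exact hi hj)).symm⟩
    -- `U` is determined by its parts inside and outside `f i`, and the first is a proper subset.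
    have hsplit : #{U ∈ s.powerset | ∀ j ∈ insert i I, ¬ f j ⊆ U} ≤
        #((f i).powerset.erase (f i) ×ˢ {V ∈ (s \ f i).powerset | ∀ j ∈ I, ¬ f j ⊆ V}) := by
      refine card_le_card_of_injOn (fun U => (U ∩ f i, U \ f i)) ?_ ?_
      · intro U hU
        simp only [coe_filter, mem_powerset, forall_mem_insert, Set.mem_ofPred_eq] at hU
        obtain ⟨hUs, hUi, hUI⟩ := hU
        simp only [coe_product, coe_erase, coe_powerset, coe_filter, Set.mem_prod,
          Set.mem_sdiff, Set.mem_preimage, Set.mem_powerset_iff, coe_subset, Set.mem_singleton_iff,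
          mem_powerset, Set.mem_ofPred_eq]
        exact ⟨⟨inter_subset_right, fun h => hUi (h ▸ inter_subset_left)⟩,
          sdiff_subset_sdiff hUs le_rfl, fun j hj h => hUI j hj (h.trans sdiff_subset)⟩
      · intro U _ V _ hUV
        simp only [Prod.mk.injEq] at hUV
        rw [← sdiff_union_inter U (f i), ← sdiff_union_inter V (f i), hUV.1, hUV.2]
    have hcard : #(f i) + #(s \ f i) = #s := by
      rw [add_comm]; exact card_sdiff_add_card_eq_card hts
    calc (#{U ∈ s.powerset | ∀ j ∈ insert i I, ¬ f j ⊆ U} : ℝ)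
        ≤ (2 ^ #(f i) - 1) * #{V ∈ (s \ f i).powerset | ∀ j ∈ I, ¬ f j ⊆ V} := by
          rw [card_product, card_erase_of_mem (mem_powerset_self _), card_powerset] at hsplit
          have hcast : ((2 ^ #(f i) - 1 : ℕ) : ℝ) = 2 ^ #(f i) - 1 := by
            rw [Nat.cast_sub Nat.one_le_two_pow]; push_cast; rfl
          rw [← hcast]
          exact_mod_cast hsplit
      _ ≤ (2 ^ #(f i) - 1) * (2 ^ #(s \ f i) * ∏ j ∈ I, (1 - (1 / 2 : ℝ) ^ #(f j))) := by
          gcongr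
          · exact sub_nonneg.2 (one_le_pow₀ one_le_two)
          · exact ih _ hI hfI
      _ = 2 ^ #s * ∏ j ∈ insert i I, (1 - (1 / 2 : ℝ) ^ #(f j)) := by
          rw [prod_insert hi, ← hcard, pow_add, one_div_pow]
          field_simp

theorem card_le_card_filter_forall_add_sum {β γ : Type*} (X : Finset β) (M : Finset γ)
    (Q : γ → β → Prop) [∀ m, DecidablePred (Q m)] :
    #X ≤ #{x ∈ X | ∀ m ∈ M, Q m x} + ∑ m ∈ M, #{x ∈ X | ¬ Q m x} := by
  have hcover : {x ∈ X | ¬ ∀ m ∈ M, Q m x} ⊆ M.biUnion fun m => {x ∈ X | ¬ Q m x} := by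
    intro x hx
    simp only [mem_filter, not_forall, mem_biUnion] at hx ⊢
    obtain ⟨hxX, m, hm, hQ⟩ := hx
    exact ⟨m, hm, hxX, hQ⟩
  calc #X = #{x ∈ X | ∀ m ∈ M, Q m x} + #{x ∈ X | ¬ ∀ m ∈ M, Q m x} :=
        (card_filter_add_card_filter_not _).symm
    _ ≤ _ := by gcongr; exact (card_le_card hcover).trans card_biUnion_le

theorem sum_range_pow_div_two_le {r : ℝ} (h0 : 0 ≤ r) (h1 : r < 1) (m : ℕ) :
    ∑ t ∈ range m, r ^ (t / 2) ≤ 2 * (1 - r)⁻¹ := by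
  have hdouble : ∀ p, ∑ t ∈ range (2 * p), r ^ (t / 2) = 2 * ∑ j ∈ range p, r ^ j := by
    intro p
    induction p with
    | zero => simp
    | succ p ih =>
      rw [show 2 * (p + 1) = 2 * p + 1 + 1 by ring, sum_range_succ, sum_range_succ, ih,
        sum_range_succ, show (2 * p + 1) / 2 = p by omega, show 2 * p / 2 = p by omega]
      ring
  calc ∑ t ∈ range m, r ^ (t / 2) ≤ ∑ t ∈ range (2 * m), r ^ (t / 2) :=
        Finset.sum_le_sum_of_subset_of_nonneg (range_subset_range.2 (by omega))
          fun _ _ _ => by positivity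
    _ = 2 * ∑ j ∈ range m, r ^ j := hdouble m
    _ ≤ 2 * (1 - r)⁻¹ := by
      have := geom_sum_Ico_le_of_lt_one (m := 0) (n := m) h0 h1
      rw [← range_eq_Ico, pow_zero, one_div] at this
      linarith

theorem Icc_subset_add_self {T : Finset ℤ} {a b : ℤ} (h0 : 0 ∈ T) (hT : Icc a b ⊆ T)
    (hab : 2 * a ≤ b + 1) : Icc a (2 * b) ⊆ T + T := by
  intro j hj
  rw [mem_Icc] at hj
  by_cases hjb : j ≤ b
  · exact Finset.mem_add.2 ⟨0, h0, j, hT (mem_Icc.2 ⟨hj.1, hjb⟩), zero_add j⟩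
  · exact Finset.mem_add.2 ⟨max a (j - b), hT (mem_Icc.2 (by omega)), j - max a (j - b),
      hT (mem_Icc.2 (by omega)), by ring⟩

theorem card_filter_notMem_add_self_le (P s I : Finset ℤ) (m : ℤ)
    (hIm : ∀ a ∈ I, 2 * a < m) (hIs : ∀ a ∈ I, {a, m - a} ⊆ P ∪ s) :
    (#{U ∈ s.powerset | m ∉ (P ∪ U) + (P ∪ U)} : ℝ) ≤
      2 ^ #s * ∏ a ∈ I, (1 - (1 / 2 : ℝ) ^ #({a, m - a} \ P)) := by
  refine le_trans ?_ (card_filter_forall_not_subset_le I s (fun a => {a, m - a} \ P) ?_ ?_)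
  · refine Nat.cast_le.2 (card_le_card fun U hU => ?_)
    simp only [mem_filter] at hU ⊢
    refine ⟨hU.1, fun a _ hsub => hU.2 ?_⟩
    have hpair : {a, m - a} ⊆ P ∪ U := fun x hx => by
      by_cases hxP : x ∈ P
      · exact mem_union_left _ hxP
      · exact mem_union_right _ (hsub (mem_sdiff.2 ⟨hx, hxP⟩))
    exact Finset.mem_add.2 ⟨a, hpair (by simp), m - a, hpair (by simp), by ring⟩
  · intro a ha x hx
    obtain ⟨hxa, hxP⟩ := mem_sdiff.1 hx
    exact (mem_union.1 (hIs a ha hxa)).resolve_left hxP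
  · intro a ha b hb hab
    refine Disjoint.mono sdiff_le sdiff_le (disjoint_left.2 fun x hxa hxb => ?_)
    have := hIm a ha
    have := hIm b hb
    simp only [mem_insert, mem_singleton] at hxa hxb
    omega

noncomputable def blockPrefix (A : Finset ℤ) (k N : ℕ) : Finset ℤ := A ∪ Icc ((k : ℤ) + 1) N

theorem blockPrefix_subset {A : Finset ℤ} {k N : ℕ} (hA : A ⊆ Icc 0 k) (hkN : k ≤ N) :
    blockPrefix A k N ⊆ Icc 0 N := by
  refine union_subset (hA.trans (Icc_subset_Icc le_rfl (by exact_mod_cast hkN))) ?_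
  exact Icc_subset_Icc (by omega) le_rfl

theorem card_filter_notMem_add_blockPrefix_le {A : Finset ℤ} {k N n t : ℕ}
    (hA : A ⊆ Icc 0 k) (hkN : k ≤ N) (ht : 2 * N + 1 + t ≤ n) :
    (#{U ∈ (Icc ((N : ℤ) + 1) n).powerset |
        (2 * N + 1 + t : ℤ) ∉ (blockPrefix A k N ∪ U) + (blockPrefix A k N ∪ U)} : ℝ) ≤
      2 ^ (n - N) * ((1 / 2) ^ (N - k) * (3 / 4) ^ (t / 2)) := by
  set P := blockPrefix A k N
  set m : ℤ := 2 * N + 1 + t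
  have hP : ∀ x ∈ P, 0 ≤ x ∧ x ≤ N := fun x hx => mem_Icc.1 (blockPrefix_subset hA hkN hx)
  have hhalf : ∀ a ∈ Ico ((k : ℤ) + 1) (N + 1), ({a, m - a} \ P : Finset ℤ) = {m - a} := by
    intro a ha
    rw [mem_Ico] at ha
    have haP : a ∈ P := mem_union_right _ (mem_Icc.2 (by omega))
    have hmaP : m - a ∉ P := fun h => by have := hP _ h; omega
    rw [insert_sdiff_of_mem _ haP, sdiff_eq_self_of_disjoint (disjoint_singleton_left.2 hmaP)]
  have hpair : ∀ a ∈ Ico ((N : ℤ) + 1) (N + 1 + (t / 2 : ℕ)),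
      ({a, m - a} \ P : Finset ℤ) = {a, m - a} := by
    intro a ha
    rw [mem_Ico] at ha
    refine sdiff_eq_self_of_disjoint (disjoint_left.2 fun x hx hxP => ?_)
    have := hP x hxP
    simp only [mem_insert, mem_singleton] at hx
    omega
  have hprod : ∏ a ∈ Ico ((k : ℤ) + 1) (N + 1 + (t / 2 : ℕ)),
      (1 - (1 / 2 : ℝ) ^ #({a, m - a} \ P)) = (1 / 2) ^ (N - k) * (3 / 4) ^ (t / 2) := by
    rw [← Ico_union_Ico_eq_Ico (b := (N : ℤ) + 1) (by omega) (by omega),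
      prod_union (Ico_disjoint_Ico_consecutive _ _ _)]
    have hlow : ∀ a ∈ Ico ((k : ℤ) + 1) (N + 1), 1 - (1 / 2 : ℝ) ^ #({a, m - a} \ P) = 1 / 2 :=
      fun a ha => by rw [hhalf a ha, card_singleton]; norm_num
    have hhigh : ∀ a ∈ Ico ((N : ℤ) + 1) (N + 1 + (t / 2 : ℕ)),
        1 - (1 / 2 : ℝ) ^ #({a, m - a} \ P) = 3 / 4 := fun a ha => by
      rw [hpair a ha, card_pair (by rw [mem_Ico] at ha; omega)]; norm_num
    rw [prod_congr rfl hlow, prod_congr rfl hhigh, prod_const, prod_const, Int.card_Ico,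
      Int.card_Ico]
    congr 2 <;> omega
  have hcard : #(Icc ((N : ℤ) + 1) n) = n - N := by rw [Int.card_Icc]; omega
  calc _ ≤ 2 ^ #(Icc ((N : ℤ) + 1) n) * ∏ a ∈ Ico ((k : ℤ) + 1) (N + 1 + (t / 2 : ℕ)),
        (1 - (1 / 2 : ℝ) ^ #({a, m - a} \ P)) := by
        refine card_filter_notMem_add_self_le P _ _ m (fun a ha => ?_) (fun a ha x hx => ?_)
        · rw [mem_Ico] at ha; omega
        · rw [mem_Ico] at ha
          rw [mem_union, mem_Icc]
          simp only [mem_insert, mem_singleton] at hx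
          by_cases hxN : x ≤ N
          · exact Or.inl (mem_union_right _ (mem_Icc.2 (by omega)))
          · exact Or.inr (by omega)
    _ = _ := by rw [hcard, hprod]

noncomputable def semiRichSets (A : Finset ℤ) (k n : ℕ) : Finset (Finset ℤ) :=
  {T ∈ (Icc (0 : ℤ) n).powerset | T ∩ Icc 0 k = A ∧ Icc ((k : ℤ) + 1) n ⊆ T + T}

theorem sigmaN_eq (A : Finset ℤ) (k n : ℕ) :
    sigmaN A k n = #(semiRichSets A k n) / 2 ^ n := rfl

theorem disjoint_blockPrefix {A : Finset ℤ} {k N n : ℕ} (hA : A ⊆ Icc 0 k) (hkN : k ≤ N)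
    {U : Finset ℤ} (hU : U ⊆ Icc ((N : ℤ) + 1) n) : Disjoint (blockPrefix A k N) U := by
  refine disjoint_left.2 fun x hxP hxU => ?_
  have := mem_Icc.1 (blockPrefix_subset hA hkN hxP)
  have := mem_Icc.1 (hU hxU)
  omega

theorem blockPrefix_union_mem_semiRichSets {A : Finset ℤ} {k N n : ℕ} (hA : A ⊆ Icc 0 k)
    (h0 : 0 ∈ A) (hkN : 2 * k + 1 ≤ N) (hNn : N ≤ n) {U : Finset ℤ}
    (hU : U ⊆ Icc ((N : ℤ) + 1) n) (hsums : ∀ t ∈ range (n - 2 * N),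
      (2 * N + 1 + t : ℤ) ∈ (blockPrefix A k N ∪ U) + (blockPrefix A k N ∪ U)) :
    blockPrefix A k N ∪ U ∈ semiRichSets A k n := by
  simp only [semiRichSets, mem_filter, mem_powerset]
  have hPn : blockPrefix A k N ⊆ Icc 0 n :=
    (blockPrefix_subset hA (by omega)).trans (Icc_subset_Icc le_rfl (by exact_mod_cast hNn))
  refine ⟨union_subset hPn (hU.trans (Icc_subset_Icc (by omega) le_rfl)), ?_, fun j hj => ?_⟩
  · ext x
    simp only [blockPrefix, mem_inter, mem_union, mem_Icc]
    constructor
    · rintro ⟨(hxA | hx) | hxU, hx0, hxk⟩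
      · exact hxA
      · omega
      · have := mem_Icc.1 (hU hxU); omega
    · exact fun hxA => ⟨Or.inl (Or.inl hxA), mem_Icc.1 (hA hxA)⟩
  · rw [mem_Icc] at hj
    by_cases hjN : j ≤ 2 * N
    · have hblock : Icc ((k : ℤ) + 1) N ⊆ blockPrefix A k N ∪ U :=
        subset_union_right.trans subset_union_left
      exact Icc_subset_add_self (mem_union_left _ (mem_union_left _ h0)) hblock (by omega)
        (mem_Icc.2 ⟨hj.1, hjN⟩)
    · have := hsums (j - 2 * N - 1).toNat (mem_range.2 (by omega))
      rwa [show (2 * N + 1 + (j - 2 * N - 1).toNat : ℤ) = j by omega] at this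

theorem card_filter_sums_le_card_semiRichSets {A : Finset ℤ} {k N n : ℕ} (hA : A ⊆ Icc 0 k)
    (h0 : 0 ∈ A) (hkN : 2 * k + 1 ≤ N) (hNn : N ≤ n) :
    #{U ∈ (Icc ((N : ℤ) + 1) n).powerset | ∀ t ∈ range (n - 2 * N),
        (2 * N + 1 + t : ℤ) ∈ (blockPrefix A k N ∪ U) + (blockPrefix A k N ∪ U)} ≤
      #(semiRichSets A k n) := by
  refine card_le_card_of_injOn (blockPrefix A k N ∪ ·) (fun U hU => ?_) (fun U hU V hV hUV => ?_)
  · obtain ⟨hUs, hsums⟩ := mem_filter.1 hU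
    exact blockPrefix_union_mem_semiRichSets hA h0 hkN hNn (mem_powerset.1 hUs) hsums
  · have hUd := disjoint_blockPrefix hA (by omega) (mem_powerset.1 (mem_filter.1 hU).1)
    have hVd := disjoint_blockPrefix hA (by omega) (mem_powerset.1 (mem_filter.1 hV).1)
    rw [← union_sdiff_cancel_left hUd, ← union_sdiff_cancel_left hVd]
    exact congrArg (· \ blockPrefix A k N) hUV

theorem two_pow_le_two_mul_card_semiRichSets {A : Finset ℤ} {k N n : ℕ} (hA : A ⊆ Icc 0 k)
    (h0 : 0 ∈ A) (hkN : 2 * k + 4 ≤ N) (hNn : N ≤ n) :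
    (2 : ℝ) ^ (n - N) ≤ 2 * #(semiRichSets A k n) := by
  set s := Icc ((N : ℤ) + 1) n
  set P := blockPrefix A k N
  have hunion := card_le_card_filter_forall_add_sum s.powerset (range (n - 2 * N))
    fun t U => (2 * N + 1 + t : ℤ) ∈ (P ∪ U) + (P ∪ U)
  have hgood := card_filter_sums_le_card_semiRichSets hA h0 (by omega) hNn
  have hs : #s.powerset = 2 ^ (n - N) := by
    rw [card_powerset, Int.card_Icc]; congr 1; omega
  have hcount := (Nat.cast_le (α := ℝ)).2 (hs ▸ hunion.trans (Nat.add_le_add_right hgood _))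
  push_cast at hcount
  have hmissing : ∀ t ∈ range (n - 2 * N),
      (#{U ∈ s.powerset | (2 * N + 1 + t : ℤ) ∉ (P ∪ U) + (P ∪ U)} : ℝ) ≤
        2 ^ (n - N) * ((1 / 2) ^ (N - k) * (3 / 4) ^ (t / 2)) := fun t ht =>
    card_filter_notMem_add_blockPrefix_le hA (by omega) (by rw [mem_range] at ht; omega)
  have hsum : ∑ t ∈ range (n - 2 * N), (2 : ℝ) ^ (n - N) * ((1 / 2) ^ (N - k) * (3 / 4) ^ (t / 2))
      ≤ 2 ^ (n - N) / 2 := by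
    have hhalf : (1 / 2 : ℝ) ^ (N - k) ≤ (1 / 2) ^ 4 :=
      pow_le_pow_of_le_one (by norm_num) (by norm_num) (by omega)
    have hgeom := sum_range_pow_div_two_le (r := 3 / 4) (by norm_num) (by norm_num) (n - 2 * N)
    calc _ = 2 ^ (n - N) * (1 / 2) ^ (N - k) * ∑ t ∈ range (n - 2 * N), (3 / 4 : ℝ) ^ (t / 2) := by
          rw [← mul_sum, ← mul_sum, mul_assoc]
      _ ≤ 2 ^ (n - N) * (1 / 2) ^ 4 * (2 * (1 - 3 / 4)⁻¹) := by gcongr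
      _ = 2 ^ (n - N) / 2 := by norm_num; ring
  linarith [sum_le_sum hmissing]

theorem pow_le_sigmaN {A : Finset ℤ} {k n : ℕ} (hA : A ⊆ Icc 0 k) (h0 : 0 ∈ A)
    (hn : 2 * k + 4 ≤ n) : (1 / 2 : ℝ) ^ (2 * k + 5) ≤ sigmaN A k n := by
  have hcount := two_pow_le_two_mul_card_semiRichSets hA h0 le_rfl hn
  have hsplit : (2 : ℝ) ^ n = 2 ^ (n - (2 * k + 4)) * 2 ^ (2 * k + 4) := by
    rw [← pow_add, Nat.sub_add_cancel hn]
  rw [sigmaN_eq, le_div_iff₀ (by positivity), hsplit, pow_succ, one_div_pow]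
  field_simp
  linarith

theorem card_semiRichSets_succ_le (A : Finset ℤ) {k n : ℕ} (hkn : k ≤ n) :
    #(semiRichSets A k (n + 1)) ≤ 2 * #(semiRichSets A k n) := by
  set S := semiRichSets A k n
  -- the top point `n + 1` cannot take part in a sum that is at most `n`
  have herase : ∀ T ∈ semiRichSets A k (n + 1), T.erase ((n : ℤ) + 1) ∈ S := by
    intro T hT
    simp only [S, semiRichSets, mem_filter, mem_powerset] at hT ⊢
    obtain ⟨hTn, hpre, hsums⟩ := hT
    refine ⟨fun x hx => ?_, ?_, fun j hj => ?_⟩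
    · obtain ⟨hxn, hxT⟩ := mem_erase.1 hx
      have := mem_Icc.1 (hTn hxT)
      exact mem_Icc.2 (by push_cast at this; omega)
    · rw [erase_inter, erase_eq_of_notMem fun h => by have := mem_Icc.1 (mem_inter.1 h).2; omega,
        hpre]
    · rw [mem_Icc] at hj
      obtain ⟨a, ha, b, hb, rfl⟩ := Finset.mem_add.1 (hsums (mem_Icc.2 ⟨hj.1, by omega⟩))
      have := mem_Icc.1 (hTn ha)
      have := mem_Icc.1 (hTn hb)
      exact Finset.mem_add.2 ⟨a, mem_erase.2 ⟨by omega, ha⟩, b, mem_erase.2 ⟨by omega, hb⟩, rfl⟩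
  have hsub : semiRichSets A k (n + 1) ⊆ S ∪ S.image (insert ((n : ℤ) + 1)) := by
    intro T hT
    by_cases hmem : (n : ℤ) + 1 ∈ T
    · exact mem_union_right _ (mem_image.2 ⟨_, herase T hT, insert_erase hmem⟩)
    · exact mem_union_left _ (erase_eq_of_notMem hmem ▸ herase T hT)
  calc #(semiRichSets A k (n + 1)) ≤ #S + #(S.image (insert ((n : ℤ) + 1))) :=
        (card_le_card hsub).trans (card_union_le _ _)
    _ ≤ 2 * #S := by rw [two_mul]; exact Nat.add_le_add_left card_image_le _

theorem sigmaN_succ_le (A : Finset ℤ) {k n : ℕ} (hkn : k ≤ n) :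
    sigmaN A k (n + 1) ≤ sigmaN A k n := by
  rw [sigmaN_eq, sigmaN_eq, pow_succ, mul_comm, ← div_div,
    div_le_div_iff_of_pos_right (by positivity), div_le_iff₀ two_pos]
  exact_mod_cast (card_semiRichSets_succ_le A hkn).trans_eq (mul_comm _ _)

theorem exists_pos_tendsto_of_antitone_of_le {u : ℕ → ℝ} {n₀ : ℕ} {c : ℝ} (hc : 0 < c)
    (hanti : ∀ n ≥ n₀, u (n + 1) ≤ u n) (hle : ∀ n ≥ n₀, c ≤ u n) :
    ∃ σ, 0 < σ ∧ Tendsto u atTop (nhds σ) := by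
  have hg : Antitone fun m => u (m + n₀) := antitone_nat_of_succ_le fun m => by
    simpa only [add_right_comm] using hanti (m + n₀) (by omega)
  have hbdd : BddBelow (Set.range fun m => u (m + n₀)) := by
    refine ⟨c, ?_⟩
    rintro _ ⟨m, rfl⟩
    exact hle _ (by omega)
  exact ⟨⨅ m, u (m + n₀), hc.trans_le (le_ciInf fun m => hle _ (by omega)),
    (tendsto_add_atTop_iff_nat n₀).1 (tendsto_atTop_ciInf hg hbdd)⟩

/-- for every `k` and `A ⊆ [0,k]` with `0 ∈ A`, the limit
`σ(A;k) = lim_n σ_n(A;k)` exists and is positive. -/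
theorem sigma_limit (k : ℕ) (A : Finset ℤ) (hA : A ⊆ Finset.Icc (0:ℤ) k) (h0 : (0:ℤ) ∈ A) :
    ∃ σ : ℝ, 0 < σ ∧ Filter.Tendsto (sigmaN A k) Filter.atTop (nhds σ) :=
  exists_pos_tendsto_of_antitone_of_le (n₀ := 2 * k + 4) (by positivity)
    (fun _ hn => sigmaN_succ_le A (by omega)) (fun _ hn => pow_le_sigmaN hA h0 hn)
end

section
/- Let n and k̄ be positive integers with n > 2k̄, and let S be a uniformly random subset of [0,n]. Then P([k̄+1, 2n−k̄−1] ⊄ S+S) ≤ 3·(3/4)^{k̄/2} / (2 − √3), and P([−n+k̄+1, n−k̄−1] ⊄ S−S) ≤ 8·(3/4)^{k̄+2} + (n+1)·(3/4)^{(n−1)/3}. -/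
open Finset Filter Pointwise
open scoped Classical

/-!
A sum `i` is missing from `S + S` only if, for every `x`, the points `x` and `i - x` are not both in
`S`; the pairs `{x, i - x}` with `x < i - x` in `[0, n]` are disjoint, hence independent, and each
is avoided with probability `3/4`. Likewise, for `d > 0`, `d ∉ S - S` forces `S` to avoid the
disjoint pairs `{a, a + d}`: all `a ∈ [0, n - d]` when `2d > n`, and at least `(n - 1) / 3` of them
otherwise.
A union bound over the possible missing element then leaves geometric series.
-/
section AvoidingPairs

variable {ι α : Type*} [DecidableEq α]

theorem card_le_three_mul_of_not_pair_subset {F G : Finset (Finset α)} {x y : α} (hxy : x ≠ y)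
    (hF : ∀ S ∈ F, ¬(x ∈ S ∧ y ∈ S)) (hFG : ∀ S ∈ F, S \ {x, y} ∈ G) : #F ≤ 3 * #G := by
  have hpair : #(({x, y} : Finset α).powerset.erase {x, y}) = 3 := by
    rw [card_erase_of_mem (mem_powerset_self _), card_powerset, card_pair hxy]; rfl
  rw [← hpair, ← card_product]
  refine card_le_card_of_injOn (fun S => (S ∩ {x, y}, S \ {x, y})) (fun S hS => ?_) ?_
  · refine mem_product.2 ⟨mem_erase.2 ⟨fun h => hF S hS ?_, mem_powerset.2 inter_subset_right⟩,
      hFG S hS⟩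
    have hsub : ({x, y} : Finset α) ⊆ S := by rw [← h]; exact inter_subset_left
    exact ⟨hsub (by simp), hsub (by simp)⟩
  · intro S _ T _ hST
    simp only [Prod.mk.injEq] at hST
    rw [← sdiff_union_inter S {x, y}, ← sdiff_union_inter T {x, y}, hST.1, hST.2]

theorem card_mul_le_of_avoid_pairs [DecidableEq ι] (A : Finset ι) {f g : ι → α}
    (hf : Set.InjOn f A) (hg : Set.InjOn g A) (hfg : ∀ a ∈ A, ∀ b ∈ A, f a ≠ g b)
    (U : Finset α) (hU : ∀ a ∈ A, f a ∈ U ∧ g a ∈ U) (F : Finset (Finset α))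
    (hF : ∀ S ∈ F, S ⊆ U ∧ ∀ a ∈ A, ¬(f a ∈ S ∧ g a ∈ S)) :
    #F * 4 ^ #A ≤ 3 ^ #A * 2 ^ #U := by
  induction A using Finset.induction_on generalizing U F with
  | empty =>
    simpa [card_powerset] using card_le_card fun S hS => mem_powerset.2 (hF S hS).1
  | @insert a A ha ih =>
    have ha' := mem_insert_self a A
    have hne : f a ≠ g a := hfg a ha' a ha'
    have hpairU : {f a, g a} ⊆ U :=
      insert_subset_iff.2 ⟨(hU a ha').1, singleton_subset_iff.2 (hU a ha').2⟩
    have hrest : ∀ b ∈ A, f b ∈ U \ {f a, g a} ∧ g b ∈ U \ {f a, g a} := by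
      intro b hb
      have hb' : b ∈ insert a A := mem_insert_of_mem hb
      have hba : b ≠ a := ne_of_mem_of_not_mem hb ha
      simp only [Finset.mem_sdiff, mem_insert, mem_singleton, not_or]
      exact ⟨⟨(hU b hb').1, fun h => hba (hf hb' ha' h), hfg b hb' a ha'⟩,
        ⟨(hU b hb').2, fun h => hfg a ha' b hb' h.symm, fun h => hba (hg hb' ha' h)⟩⟩
    have hsmall := ih (hf.mono (by simp)) (hg.mono (by simp))
      (fun b hb c hc => hfg b (mem_insert_of_mem hb) c (mem_insert_of_mem hc)) _ hrest
      (F.image (· \ {f a, g a})) (by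
        simp only [mem_image, forall_exists_index, and_imp, forall_apply_eq_imp_iff₂]
        exact fun S hS => ⟨sdiff_subset_sdiff (hF S hS).1 le_rfl, fun b hb h => (hF S hS).2 b
          (mem_insert_of_mem hb) ⟨(Finset.mem_sdiff.1 h.1).1, (Finset.mem_sdiff.1 h.2).1⟩⟩)
    have hsplit : #F ≤ 3 * #(F.image (· \ {f a, g a})) :=
      card_le_three_mul_of_not_pair_subset hne (fun S hS => (hF S hS).2 a ha')
        fun S hS => mem_image_of_mem _ hS
    have hcard : #U = #(U \ {f a, g a}) + 2 := by
      rw [card_sdiff_of_subset hpairU, ← card_pair hne]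
      have := card_le_card hpairU
      omega
    rw [card_insert_of_notMem ha, hcard, pow_succ, pow_succ, pow_add]
    nlinarith [Nat.mul_le_mul_right (4 ^ #A) hsplit]

end AvoidingPairs

theorem card_Icc_zero_natCast (n : ℕ) : #(Icc (0 : ℤ) n) = n + 1 := by
  rw [Int.card_Icc]; omega

theorem prAll_mono {n : ℕ} {P Q : Finset ℤ → Prop} (h : ∀ S ⊆ Icc (0 : ℤ) n, P S → Q S) :
    prAll n P ≤ prAll n Q := by
  unfold prAll
  refine div_le_div_of_nonneg_right ?_ (by positivity)
  exact_mod_cast card_le_card fun S hS => by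
    simp only [Finset.mem_filter, mem_powerset] at hS ⊢
    exact ⟨hS.1, h S hS.1 hS.2⟩

theorem prAll_exists_le_sum {ι : Type*} (n : ℕ) (I : Finset ι) (P : ι → Finset ℤ → Prop) :
    prAll n (fun S => ∃ i ∈ I, P i S) ≤ ∑ i ∈ I, prAll n (P i) := by
  simp only [prAll, ← sum_div]
  gcongr
  rw [← Nat.cast_sum, Nat.cast_le]
  refine le_trans (card_le_card fun S hS => ?_) card_biUnion_le
  simp only [Finset.mem_filter, mem_biUnion] at hS ⊢
  obtain ⟨hS, i, hi, hPi⟩ := hS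
  exact ⟨i, hi, hS, hPi⟩

theorem prAll_le_of_avoid_pairs {ι : Type*} [DecidableEq ι] {n : ℕ} {P : Finset ℤ → Prop}
    (U : Finset ℤ) (A : Finset ι) {f g : ι → ℤ} (hf : Set.InjOn f A) (hg : Set.InjOn g A)
    (hfg : ∀ a ∈ A, ∀ b ∈ A, f a ≠ g b) (hU : ∀ a ∈ A, f a ∈ U ∧ g a ∈ U)
    (hP : ∀ S ⊆ Icc (0 : ℤ) n, P S → S ⊆ U ∧ ∀ a ∈ A, ¬(f a ∈ S ∧ g a ∈ S)) :
    prAll n P ≤ (3 / 4) ^ #A * 2 ^ #U / 2 ^ (n + 1) := by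
  unfold prAll
  gcongr
  have hcount (F : Finset (Finset ℤ)) (hF : ∀ S ∈ F, S ⊆ Icc (0 : ℤ) n ∧ P S) :
      (#F : ℝ) ≤ (3 / 4) ^ #A * 2 ^ #U := by
    rw [div_pow, div_mul_eq_mul_div, le_div_iff₀ (by positivity)]
    exact_mod_cast card_mul_le_of_avoid_pairs A hf hg hfg U hU F fun S hS =>
      hP S (hF S hS).1 (hF S hS).2
  refine hcount _ fun S hS => ?_
  simp only [Finset.mem_filter, Finset.mem_powerset] at hS
  exact hS

theorem prAll_le_of_avoid_pairs_of_subset_Icc {ι : Type*} [DecidableEq ι] {n : ℕ}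
    {P : Finset ℤ → Prop} (A : Finset ι) {f g : ι → ℤ} (hf : Set.InjOn f A) (hg : Set.InjOn g A)
    (hfg : ∀ a ∈ A, ∀ b ∈ A, f a ≠ g b) (hA : ∀ a ∈ A, f a ∈ Icc (0 : ℤ) n ∧ g a ∈ Icc (0 : ℤ) n)
    (hP : ∀ S, P S → ∀ a ∈ A, ¬(f a ∈ S ∧ g a ∈ S)) :
    prAll n P ≤ (3 / 4) ^ #A := by
  have := prAll_le_of_avoid_pairs _ A hf hg hfg hA fun S hS hPS => ⟨hS, hP S hPS⟩
  rwa [card_Icc_zero_natCast, mul_div_cancel_right₀ _ (by positivity)] at this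

theorem sqrt_three_div_two_sq : (√3 / 2) ^ 2 = (3 / 4 : ℝ) := by
  rw [div_pow, Real.sq_sqrt (by norm_num)]; norm_num

theorem sqrt_three_div_two_lt_one : √3 / 2 < 1 := by
  have : √3 < 2 := by rw [Real.sqrt_lt' two_pos]; norm_num
  linarith

theorem one_half_le_sqrt_three_div_two : 1 / 2 ≤ √3 / 2 := by
  gcongr; exact Real.one_le_sqrt.2 (by norm_num)

theorem sqrt_three_div_two_pow (k : ℕ) : (√3 / 2) ^ k = (3 / 4 : ℝ) ^ ((k : ℝ) / 2) := by
  rw [show (k : ℝ) / 2 = 1 / 2 * k by ring, Real.rpow_mul_natCast (by norm_num),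
    ← Real.sqrt_eq_rpow, Real.sqrt_div' _ (by norm_num), show (4 : ℝ) = 2 ^ 2 by norm_num,
    Real.sqrt_sq zero_le_two]

theorem geom_sum_range_le_one_div {r : ℝ} (h0 : 0 ≤ r) (h1 : r < 1) (N : ℕ) :
    ∑ j ∈ range N, r ^ j ≤ 1 / (1 - r) := by
  have := geom_sum_Ico_le_of_lt_one (x := r) (m := 0) (n := N) h0 h1
  rwa [← Finset.range_eq_Ico, pow_zero] at this

theorem sum_range_pow_min_le {r : ℝ} (h0 : 0 ≤ r) (h1 : r < 1) (N : ℕ) :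
    ∑ j ∈ range N, r ^ min j (N - 1 - j) ≤ 2 / (1 - r) := by
  calc ∑ j ∈ range N, r ^ min j (N - 1 - j) ≤ ∑ j ∈ range N, (r ^ j + r ^ (N - 1 - j)) := by
        gcongr with j
        rcases min_choice j (N - 1 - j) with h | h <;> rw [h] <;> simp [pow_nonneg h0]
    _ = 2 * ∑ j ∈ range N, r ^ j := by rw [sum_add_distrib, sum_range_reflect (r ^ ·)]; ring
    _ ≤ 2 * (1 / (1 - r)) := by gcongr; exact geom_sum_range_le_one_div h0 h1 N
    _ = 2 / (1 - r) := by ring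

/-- `S` misses `i` only if it misses a point of each of the `⌊c / 2⌋` pairs `{x, i - x}` of the
window `[lo, lo + c - 1]`, and also its centre `i / 2` when `c` is odd. -/
theorem prAll_not_mem_add_le (n : ℕ) {i lo : ℤ} {c : ℕ} (hlo : 0 ≤ lo) (hc : lo + c ≤ n + 1)
    (hi : 2 * lo + c = i + 1) :
    prAll n (fun S => i ∉ S + S) ≤ (√3 / 2) ^ c := by
  obtain ⟨p, rfl | rfl⟩ := Nat.even_or_odd' c
  all_goals
    have hpairs : ∀ S, i ∉ S + S → ∀ j ∈ range p, ¬(lo + j ∈ S ∧ i - (lo + j) ∈ S) :=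
      fun S hS j _ h => hS (by simpa using add_mem_add h.1 h.2)
    have hinj : Set.InjOn (fun j : ℕ => lo + j) (range p) := fun _ _ _ _ h => by simpa using h
    have hinj' : Set.InjOn (fun j : ℕ => i - (lo + j)) (range p) :=
      fun _ _ _ _ h => by simpa using h
    have hcross : ∀ j ∈ range p, ∀ j' ∈ range p, lo + j ≠ i - (lo + j') := by
      intro j hj j' hj'; rw [mem_range] at hj hj'; push_cast at hi; omega
  · calc prAll n _ ≤ (3 / 4) ^ #(range p) :=
          prAll_le_of_avoid_pairs_of_subset_Icc _ hinj hinj' hcross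
            (fun j hj => by rw [mem_range] at hj; push_cast at hi; simp only [mem_Icc]; omega)
            hpairs
      _ = (√3 / 2) ^ (2 * p) := by rw [card_range, pow_mul, sqrt_three_div_two_sq]
  · have hmid : lo + p ∈ Icc (0 : ℤ) n := by push_cast at hc; simp only [mem_Icc]; omega
    calc prAll n _
        ≤ (3 / 4) ^ #(range p) * 2 ^ #((Icc (0 : ℤ) n).erase (lo + p)) / 2 ^ (n + 1) := by
          refine prAll_le_of_avoid_pairs _ _ hinj hinj' hcross
            (fun j hj => by
              rw [mem_range] at hj; push_cast at hi hc
              simp only [mem_erase, mem_Icc]; omega)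
            fun S hS hiS => ⟨fun x hx => mem_erase.2 ⟨?_, hS hx⟩, hpairs S hiS⟩
          rintro rfl
          exact hiS (by
            have := add_mem_add hx hx
            push_cast at hi
            rwa [show lo + p + (lo + p) = i by omega] at this)
      _ = (3 / 4) ^ p * (1 / 2) := by
          rw [card_range, card_erase_of_mem hmid, card_Icc_zero_natCast, Nat.add_sub_cancel,
            pow_succ 2 n]
          field_simp
      _ ≤ (√3 / 2) ^ (2 * p + 1) := by
          rw [pow_succ, pow_mul, sqrt_three_div_two_sq]
          exact mul_le_mul_of_nonneg_left one_half_le_sqrt_three_div_two (by positivity)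

theorem prAll_not_mem_add_le_min (n i : ℕ) (hi : i ≤ 2 * n) :
    prAll n (fun S => (i : ℤ) ∉ S + S) ≤ (√3 / 2) ^ (min i (2 * n - i) + 1) := by
  rcases le_total i n with h | h
  · rw [min_eq_left (by omega)]
    exact prAll_not_mem_add_le n le_rfl (by push_cast; omega) (by push_cast; ring)
  · rw [min_eq_right (by omega)]
    exact prAll_not_mem_add_le n (lo := i - n) (by omega) (by push_cast; omega)
      (by push_cast; omega)

theorem prAll_missing_sum_le (n k : ℕ) :
    prAll n (fun S => ¬ Icc ((k : ℤ) + 1) (2 * (n : ℤ) - k - 1) ⊆ S + S)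
      ≤ 3 * (3 / 4 : ℝ) ^ ((k : ℝ) / 2) / (2 - √3) := by
  set N := 2 * n - 2 * k - 1
  calc _ ≤ prAll n (fun S => ∃ j ∈ range N, ((k + 1 + j : ℕ) : ℤ) ∉ S + S) :=
        prAll_mono fun S _ hS => by
          obtain ⟨i, hi, hiS⟩ := not_subset.1 hS
          rw [mem_Icc] at hi
          refine ⟨(i - k - 1).toNat, mem_range.2 (by omega), ?_⟩
          rwa [show ((k + 1 + (i - k - 1).toNat : ℕ) : ℤ) = i by omega]
    _ ≤ ∑ j ∈ range N, prAll n (fun S => ((k + 1 + j : ℕ) : ℤ) ∉ S + S) :=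
        prAll_exists_le_sum n _ _
    _ ≤ ∑ j ∈ range N, (√3 / 2) ^ (k + 2) * (√3 / 2) ^ min j (N - 1 - j) := by
        gcongr with j hj
        rw [mem_range] at hj
        rw [← pow_add, show k + 2 + min j (N - 1 - j) = min (k + 1 + j) (2 * n - (k + 1 + j)) + 1
          by omega]
        exact prAll_not_mem_add_le_min n _ (by omega)
    _ ≤ (√3 / 2) ^ (k + 2) * (2 / (1 - √3 / 2)) := by
        rw [← mul_sum]
        gcongr
        exact sum_range_pow_min_le (by positivity) sqrt_three_div_two_lt_one N
    _ = 3 * (3 / 4 : ℝ) ^ ((k : ℝ) / 2) / (2 - √3) := by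
        have : 2 - √3 ≠ 0 := by linarith [sqrt_three_div_two_lt_one]
        rw [pow_add, sqrt_three_div_two_sq, sqrt_three_div_two_pow]
        field_simp
        ring

theorem prAll_zero_not_mem_sub_le (n : ℕ) :
    prAll n (fun S => (0 : ℤ) ∉ S - S) ≤ (3 / 4) ^ (n + 1) := by
  have hempty : ∀ S : Finset ℤ, (0 : ℤ) ∉ S - S → S = ∅ := fun S hS => by
    by_contra hne
    obtain ⟨x, hx⟩ := Finset.nonempty_iff_ne_empty.2 hne
    exact hS (by simpa using Finset.sub_mem_sub hx hx)
  calc prAll n _ ≤ 1 / 2 ^ (n + 1) := by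
        unfold prAll
        gcongr
        refine Nat.cast_le_one.2 (card_le_one.2 fun S hS T hT => ?_)
        simp only [Finset.mem_filter] at hS hT
        rw [hempty S hS.2, hempty T hT.2]
    _ ≤ (3 / 4) ^ (n + 1) := by
        rw [one_div, ← inv_pow]
        gcongr
        norm_num

theorem prAll_not_mem_sub_le_of_lt_two_mul {n d : ℕ} (hd : n < 2 * d) (hdn : d ≤ n) :
    prAll n (fun S => (d : ℤ) ∉ S - S) ≤ (3 / 4) ^ (n + 1 - d) := by
  have := prAll_le_of_avoid_pairs_of_subset_Icc (n := n) (P := fun S => (d : ℤ) ∉ S - S)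
    (range (n + 1 - d)) (f := fun a => (a : ℤ)) (g := fun a => a + d)
    (fun _ _ _ _ h => by simpa using h) (fun _ _ _ _ h => by simpa using h)
    (fun a ha b hb => by rw [mem_range] at ha hb; omega)
    (fun a ha => by rw [mem_range] at ha; simp only [mem_Icc]; omega)
    fun S hS a _ h => hS (by simpa using Finset.sub_mem_sub h.2 h.1)
  rwa [card_range] at this

/-- Spreads `ℕ` over the blocks `[2 m d, 2 m d + d)`, `m ∈ ℕ`, keeping the blocks in between free,
so that its image `A` is disjoint from `A + d`. -/
def spreadBlocks (d t : ℕ) : ℕ := t + d * (t / d)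

theorem spreadBlocks_eq (d t : ℕ) : spreadBlocks d t = t % d + d * (2 * (t / d)) := by
  have := Nat.mod_add_div t d
  unfold spreadBlocks; linarith

theorem spreadBlocks_div {d : ℕ} (hd : 0 < d) (t : ℕ) : spreadBlocks d t / d = 2 * (t / d) := by
  rw [spreadBlocks_eq, Nat.add_mul_div_left _ _ hd, Nat.div_eq_of_lt (Nat.mod_lt t hd), zero_add]

theorem spreadBlocks_injective {d : ℕ} (hd : 0 < d) : Function.Injective (spreadBlocks d) := by
  intro t s h
  have hdiv : t / d = s / d := by
    have := spreadBlocks_div hd t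
    rw [h, spreadBlocks_div hd] at this
    omega
  have hmod : t % d = s % d := by
    have ht := spreadBlocks_eq d t
    have hs := spreadBlocks_eq d s
    rw [hdiv] at ht
    omega
  rw [← Nat.div_add_mod t d, ← Nat.div_add_mod s d, hdiv, hmod]

theorem spreadBlocks_ne_add {d : ℕ} (hd : 0 < d) (t s : ℕ) :
    spreadBlocks d t ≠ spreadBlocks d s + d := fun h => by
  have := congrArg (· / d) h
  simp only [Nat.add_div_right _ hd, spreadBlocks_div hd] at this
  omega

theorem spreadBlocks_le (d t : ℕ) : spreadBlocks d t ≤ 2 * t := by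
  have := Nat.mul_div_le t d
  unfold spreadBlocks; omega

theorem spreadBlocks_of_lt {d t : ℕ} (ht : t < d) : spreadBlocks d t = t := by
  simp [spreadBlocks, Nat.div_eq_of_lt ht]

/-- The pairs `{a, a + d}`, `a = spreadBlocks d t` with `t < max d ((n - d) / 2 + 1)`, are disjoint
and lie in `[0, n]`; there are at least `(n - 1) / 3` of them. -/
theorem prAll_not_mem_sub_le_of_two_mul_le {n d : ℕ} (hd : 0 < d) (hdn : 2 * d ≤ n) :
    prAll n (fun S => (d : ℤ) ∉ S - S) ≤ (3 / 4) ^ (((n : ℝ) - 1) / 3) := by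
  set p := max d ((n - d) / 2 + 1)
  have hle : ∀ t < p, spreadBlocks d t + d ≤ n := fun t ht => by
    rcases lt_or_ge t d with h | h
    · rw [spreadBlocks_of_lt h]; omega
    · have := spreadBlocks_le d t; omega
  calc prAll n _ ≤ (3 / 4) ^ #(range p) :=
        prAll_le_of_avoid_pairs_of_subset_Icc (range p)
          (f := fun t => (spreadBlocks d t : ℤ)) (g := fun t => (spreadBlocks d t : ℤ) + d)
          (fun t _ s _ h => spreadBlocks_injective hd (by simpa using h))
          (fun t _ s _ h => spreadBlocks_injective hd (by simpa using h))
          (fun t _ s _ h => spreadBlocks_ne_add hd t s (by exact_mod_cast h))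
          (fun t ht => by
            have := hle t (mem_range.1 ht)
            simp only [mem_Icc]; omega)
          fun S hS a _ h => hS (by simpa using Finset.sub_mem_sub h.2 h.1)
    _ = (3 / 4) ^ (p : ℝ) := by rw [card_range, Real.rpow_natCast]
    _ ≤ (3 / 4) ^ (((n : ℝ) - 1) / 3) := by
        refine Real.rpow_le_rpow_of_exponent_ge (by norm_num) (by norm_num) ?_
        have : (n : ℝ) ≤ 3 * p + 1 := by exact_mod_cast (by omega : n ≤ 3 * p + 1)
        rw [div_le_iff₀ (by norm_num)]
        linarith

theorem prAll_not_mem_sub_le {n d : ℕ} (hdn : d ≤ n) :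
    prAll n (fun S => (d : ℤ) ∉ S - S)
      ≤ (3 / 4) ^ (((n : ℝ) - 1) / 3) + (3 / 4) ^ (n + 1 - d) := by
  rcases Nat.eq_zero_or_pos d with rfl | hd
  · simpa using (prAll_zero_not_mem_sub_le n).trans (le_add_of_nonneg_left (by positivity))
  rcases le_or_gt (2 * d) n with h | h
  · exact (prAll_not_mem_sub_le_of_two_mul_le hd h).trans (le_add_of_nonneg_right (by positivity))
  · exact (prAll_not_mem_sub_le_of_lt_two_mul h hdn).trans (le_add_of_nonneg_left (by positivity))

theorem prAll_missing_diff_le (n k : ℕ) :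
    prAll n (fun S => ¬ Icc (-(n : ℤ) + k + 1) ((n : ℤ) - k - 1) ⊆ S - S)
      ≤ 8 * (3 / 4 : ℝ) ^ (k + 2) + (n + 1) * (3 / 4 : ℝ) ^ (((n : ℝ) - 1) / 3) := by
  set X : ℝ := (3 / 4) ^ (((n : ℝ) - 1) / 3)
  have hgeom : ∑ j ∈ range (n - k), (3 / 4 : ℝ) ^ j ≤ 4 := by
    have := geom_sum_range_le_one_div (r := 3 / 4) (by norm_num) (by norm_num) (n - k)
    norm_num at this ⊢
    exact this
  calc _ ≤ prAll n (fun S => ∃ d ∈ range (n - k), (d : ℤ) ∉ S - S) :=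
        prAll_mono fun S _ hS => by
          obtain ⟨i, hi, hiS⟩ := not_subset.1 hS
          rw [mem_Icc] at hi
          refine ⟨i.natAbs, mem_range.2 (by omega), fun hd => hiS ?_⟩
          obtain ⟨x, hx, y, hy, hxy⟩ := Finset.mem_sub.1 hd
          rcases Int.natAbs_eq i with h | h
          · exact Finset.mem_sub.2 ⟨x, hx, y, hy, by omega⟩
          · exact Finset.mem_sub.2 ⟨y, hy, x, hx, by omega⟩
    _ ≤ ∑ d ∈ range (n - k), prAll n (fun S => (d : ℤ) ∉ S - S) := prAll_exists_le_sum n _ _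
    _ ≤ ∑ d ∈ range (n - k), (X + (3 / 4) ^ (k + 2) * (3 / 4) ^ (n - k - 1 - d)) := by
        gcongr with d hd
        rw [mem_range] at hd
        rw [← pow_add, show k + 2 + (n - k - 1 - d) = n + 1 - d by omega]
        exact prAll_not_mem_sub_le (by omega)
    _ = (n - k : ℕ) * X + (3 / 4) ^ (k + 2) * ∑ j ∈ range (n - k), (3 / 4 : ℝ) ^ j := by
        rw [sum_add_distrib, sum_const, card_range, nsmul_eq_mul, ← mul_sum,
          sum_range_reflect (fun j => (3 / 4 : ℝ) ^ j)]
    _ ≤ (n + 1) * X + (3 / 4) ^ (k + 2) * 4 := by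
        gcongr
        exact_mod_cast (by omega : n - k ≤ n + 1)
    _ ≤ 8 * (3 / 4 : ℝ) ^ (k + 2) + (n + 1) * X := by
        linarith [pow_nonneg (by norm_num : (0 : ℝ) ≤ 3 / 4) (k + 2)]

theorem missing_middle_prob_general (n k : ℕ) :
    prAll n (fun S => ¬ Finset.Icc ((k:ℤ) + 1) (2 * (n:ℤ) - k - 1) ⊆ S + S)
      ≤ 3 * (3/4 : ℝ) ^ ((k:ℝ) / 2) / (2 - Real.sqrt 3) ∧
    prAll n (fun S => ¬ Finset.Icc (-(n:ℤ) + k + 1) ((n:ℤ) - k - 1) ⊆ S - S)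
      ≤ 8 * (3/4 : ℝ) ^ (k + 2) + (n + 1) * (3/4 : ℝ) ^ (((n:ℝ) - 1) / 3) :=
  ⟨prAll_missing_sum_le n k, prAll_missing_diff_le n k⟩

/-- bounds on the probability of a missing middle sum or difference, for a
uniform random `S ⊆ [0,n]`. -/
theorem missing_middle_prob (n k : ℕ) (hk : 0 < k) (hn : 2 * k < n) :
    prAll n (fun S => ¬ Finset.Icc ((k:ℤ) + 1) (2 * (n:ℤ) - k - 1) ⊆ S + S)
      ≤ 3 * (3/4 : ℝ) ^ ((k:ℝ) / 2) / (2 - Real.sqrt 3) ∧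
    prAll n (fun S => ¬ Finset.Icc (-(n:ℤ) + k + 1) ((n:ℤ) - k - 1) ⊆ S - S)
      ≤ 8 * (3/4 : ℝ) ^ (k + 2) + (n + 1) * (3/4 : ℝ) ^ (((n:ℝ) - 1) / 3) :=
  missing_middle_prob_general n k
end

section
/- Let k < h < j be integers and A ⊆ [0,k]. Let 𝓑_h(A; k) denote the set of all B ⊆ [0,h] satisfying B ∩ [0,k] = A and [k+1, h] ⊆ B+B. Then G_j(A; k) = Σ_{B ∈ 𝓑_h(A;k)} G_j(B; h). -/
open Finset Filter Pointwise
open scoped Classical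

/-!
Split each `T` counted by `G_j(A; k)` at `h` into its prefix `B = T ∩ [0,h]`. A sum `x ≤ h` of
two nonnegative elements of `T` only uses elements of `B`, so the covering condition on
`[k+1, j−1]` splits into `[k+1, h] ⊆ B+B` and `[h+1, j−1] ⊆ T+T`, and `T` is counted by
`G_j(A; k)` exactly when `B ∈ 𝓑_h(A; k)` and `T` is counted by `G_j(B; h)`.
-/

namespace Finset

variable {T : Finset ℤ} {h : ℤ}

lemma mem_add_self_inter_Icc_iff (hT : ∀ t ∈ T, 0 ≤ t) {x : ℤ} (hx : x ≤ h) :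
    x ∈ T ∩ Icc 0 h + T ∩ Icc 0 h ↔ x ∈ T + T := by
  refine ⟨fun hx' => add_subset_add inter_subset_left inter_subset_left hx', ?_⟩
  rw [mem_add]
  rintro ⟨a, ha, b, hb, rfl⟩
  have := hT a ha
  have := hT b hb
  exact add_mem_add (mem_inter.2 ⟨ha, mem_Icc.2 ⟨by omega, by omega⟩⟩)
    (mem_inter.2 ⟨hb, mem_Icc.2 ⟨by omega, by omega⟩⟩)

lemma Icc_subset_add_self_iff_of_le_of_le (hT : ∀ t ∈ T, 0 ≤ t) {a c : ℤ} (hah : a ≤ h + 1)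
    (hhc : h ≤ c) :
    Icc a c ⊆ T + T ↔ Icc a h ⊆ T ∩ Icc 0 h + T ∩ Icc 0 h ∧ Icc (h + 1) c ⊆ T + T := by
  simp only [subset_iff, mem_Icc]
  refine ⟨fun hcov => ⟨fun x hx => ?_, fun x hx => hcov ⟨by omega, hx.2⟩⟩, ?_⟩
  · exact (mem_add_self_inter_Icc_iff hT hx.2).2 (hcov ⟨hx.1, hx.2.trans hhc⟩)
  · rintro ⟨hlow, hhigh⟩ x hx
    by_cases hxh : x ≤ h
    · exact (mem_add_self_inter_Icc_iff hT hxh).1 (hlow ⟨hx.1, hxh⟩)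
    · exact hhigh ⟨by omega, hx.2⟩

end Finset

theorem G_decompose_general (k h j : ℕ) (hkh : k < h) (hhj : h < j)
    (A : Finset ℤ) :
    G A k j =
      ∑ B ∈ (Finset.Icc (0:ℤ) h).powerset.filter
          (fun B => B ∩ Finset.Icc (0:ℤ) k = A ∧ Finset.Icc ((k:ℤ) + 1) h ⊆ B + B),
        G B h j := by
  have hkh' : (k : ℤ) ≤ h := by exact_mod_cast hkh.le
  have hhj' : (h : ℤ) ≤ j - 1 := by omega
  have split : ∀ T ⊆ Icc (0 : ℤ) j,
      (T ∩ Icc 0 (k : ℤ) = A ∧ Icc ((k : ℤ) + 1) (j - 1) ⊆ T + T) ↔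
        ((T ∩ Icc 0 (h : ℤ) ∩ Icc 0 (k : ℤ) = A ∧
          Icc ((k : ℤ) + 1) h ⊆ T ∩ Icc 0 (h : ℤ) + T ∩ Icc 0 (h : ℤ)) ∧
          Icc ((h : ℤ) + 1) (j - 1) ⊆ T + T) := by
    intro T hT
    rw [inter_assoc, inter_eq_right.2 (Icc_subset_Icc le_rfl hkh'),
      Icc_subset_add_self_iff_of_le_of_le (fun t ht => (mem_Icc.1 (hT ht)).1) (by omega) hhj',
      and_assoc]
  unfold G
  refine (card_eq_sum_card_fiberwise (f := (· ∩ Icc 0 (h : ℤ))) fun T hT => ?_).trans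
    (sum_congr rfl fun B hB => ?_)
  · simp only [mem_coe, mem_filter, mem_powerset] at hT ⊢
    exact ⟨inter_subset_right, ((split T hT.1).1 ⟨hT.2.1, hT.2.2.1⟩).1⟩
  rw [mem_filter] at hB
  rw [filter_filter]
  refine congrArg card (filter_congr fun T hT => ?_)
  rw [← and_assoc, split T (mem_powerset.1 hT)]
  constructor
  · rintro ⟨⟨⟨-, hcov⟩, hj⟩, rfl⟩
    exact ⟨rfl, hcov, hj⟩
  · rintro ⟨rfl, hcov, hj⟩
    exact ⟨⟨⟨hB.2, hcov⟩, hj⟩, rfl⟩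

/-- `G_j(A;k) = Σ_{B ∈ 𝓑_h(A;k)} G_j(B;h)` for `k < h < j`. -/
theorem G_decompose (k h j : ℕ) (hkh : k < h) (hhj : h < j)
    (A : Finset ℤ) (hA : A ⊆ Finset.Icc (0:ℤ) k) :
    G A k j =
      ∑ B ∈ (Finset.Icc (0:ℤ) h).powerset.filter
          (fun B => B ∩ Finset.Icc (0:ℤ) k = A ∧ Finset.Icc ((k:ℤ) + 1) h ⊆ B + B),
        G B h j :=
  G_decompose_general k h j hkh hhj A
end
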